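/- Dual-certificate lemma: Let C, F be finite nonempty sets, σ a preference profile, and φ > 0. Suppose that for each o ∈ F there is a pseudometric d^o on C ∪ F consistent with σ such that Σ_{j∈C} d^o(o,j) = min_{o'∈F} Σ_{j∈C} d^o(o',j) > 0 (i.e., o is an optimal facility in d^o), and such that for every i ∈ F, Σ_{o∈F} Σ_{j∈C} d^o(i,j) ≥ φ · Σ_{o∈F} Σ_{j∈C} d^o(o,j). Then for every probability distribution q on F there exists o ∈ F with cost_{d^o}(q) ≥ φ · OPT(d^o) and OPT(d^o) > 0. Consequently sup_{d ◁ σ, OPT(d)>0} cost_d(q)/OPT(d) ≥ φ for every distribution q. -/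
import Mathlib


/-- `d` is a pseudometric: nonnegative, symmetric, zero on the diagonal,
and satisfying the triangle inequality `d x y ≤ d x z + d y z`. -/
def IsPseudometric {X : Type*} (d : X → X → ℝ) : Prop :=
  (∀ x y, 0 ≤ d x y) ∧ (∀ x y, d x y = d y x) ∧ (∀ x, d x x = 0) ∧
    (∀ x y z, d x y ≤ d x z + d y z)

/-- `d` is consistent with the profile `σ`: whenever client `j` prefers `a` to `b`,
facility `a` is at least as close to `j` as `b`. -/
def Consistent {C F : Type*} (d : (C ⊕ F) → (C ⊕ F) → ℝ)
    (σ : C → F → F → Prop) : Prop :=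
  ∀ j a b, σ j a b → d (Sum.inr a) (Sum.inl j) ≤ d (Sum.inr b) (Sum.inl j)

/-- Expected social cost of the distribution `q` under metric `d`. -/
def cost {C F : Type*} [Fintype C] [Fintype F]
    (d : (C ⊕ F) → (C ⊕ F) → ℝ) (q : F → ℝ) : ℝ :=
  ∑ i, q i * ∑ j, d (Sum.inr i) (Sum.inl j)

/-- Total cost of the clients if facility `o` is chosen. -/
def facCost {C F : Type*} [Fintype C] (d : (C ⊕ F) → (C ⊕ F) → ℝ) (o : F) : ℝ :=
  ∑ j, d (Sum.inr o) (Sum.inl j)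

/-- Optimal (minimum) total cost over all facilities. -/
noncomputable def OPT {C F : Type*} [Fintype C] [Fintype F] [Nonempty F]
    (d : (C ⊕ F) → (C ⊕ F) → ℝ) : ℝ :=
  Finset.univ.inf' Finset.univ_nonempty (facCost d)

/-- dual-certificate lemma: if for each facility `o` there is a
pseudometric `d o` consistent with `σ` in which `o` is an optimal facility and the
optimum is positive, and the combined metrics satisfy
`Σ_o Σ_j d^o(i,j) ≥ φ · Σ_o Σ_j d^o(o,j)` for every facility `i`, then every
probability distribution `q` on the facilities has `cost_{d^o} q ≥ φ · OPT (d^o)` for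
some `o` with `OPT (d^o) > 0`; hence the best achievable ratio is at least `φ`. -/
theorem dual_certificate {C F : Type*} [Fintype C] [Fintype F]
    [Nonempty C] [Nonempty F]
    (σ : C → F → F → Prop) (φ : ℝ) (hφ : 0 < φ)
    (d : F → ((C ⊕ F) → (C ⊕ F) → ℝ))
    (hpm : ∀ o, IsPseudometric (d o))
    (hcons : ∀ o, Consistent (d o) σ)
    (hopt : ∀ o, facCost (d o) o = OPT (d o))
    (hpos : ∀ o, 0 < facCost (d o) o)
    (hineq : ∀ i : F, φ * ∑ o, facCost (d o) o ≤ ∑ o, facCost (d o) i)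
    (q : F → ℝ) (hq0 : ∀ i, 0 ≤ q i) (hq1 : ∑ i, q i = 1) :
    ∃ o : F, φ * OPT (d o) ≤ cost (d o) q ∧ 0 < OPT (d o) := by
  by_contra h
  push_neg at h
  have hOPTpos : ∀ o, 0 < OPT (d o) := fun o => (hopt o) ▸ hpos o
  have hlt : ∀ o, cost (d o) q < φ * OPT (d o) := fun o => lt_of_not_ge fun hc => (h o hc).not_gt (hOPTpos o)
  have hsum : ∑ o, cost (d o) q < ∑ o, φ * OPT (d o) :=
    Finset.sum_lt_sum_of_nonempty Finset.univ_nonempty (fun o _ => hlt o)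
  have hswap : ∑ o, cost (d o) q = ∑ i, q i * ∑ o, facCost (d o) i := by
    unfold cost facCost
    rw [Finset.sum_comm]
    simp [Finset.mul_sum]
  have hlb : φ * ∑ o, facCost (d o) o ≤ ∑ o, cost (d o) q := by
    rw [hswap]
    calc φ * ∑ o, facCost (d o) o = ∑ i, q i * (φ * ∑ o, facCost (d o) o) := by
          rw [← Finset.sum_mul, hq1, one_mul, mul_comm]
      _ ≤ ∑ i, q i * ∑ o, facCost (d o) i :=
          Finset.sum_le_sum (fun i _ => mul_le_mul_of_nonneg_left (hineq i) (hq0 i))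
  have heq : ∑ o, φ * OPT (d o) = φ * ∑ o, facCost (d o) o := by
    rw [← Finset.mul_sum]
    congr 1
    exact Finset.sum_congr rfl (fun o _ => (hopt o).symm)
  linarith
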